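/- (Theorem 1, equivalence of the robust harvested-energy maximization with its one-parameter reformulation.) Let n, K, L ≥ 1; let h̄_s ∈ ℂⁿ, h̄_{e,k} ∈ ℂⁿ for k = 1,…,K, h̄_l ∈ ℂⁿ for l = 1,…,L; let σ_s, σ_e > 0, ε_s, ε_e, ε_l ≥ 0, P > 0, R ≥ 0. Define the objective g(w) = min over l = 1,…,L of the infimum over e_l ∈ ℂⁿ with ‖e_l‖ ≤ ε_l of |(h̄_l + e_l)^H w|². Define the feasible set F = { w ∈ ℂⁿ : ‖w‖² ≤ P, and (inf over ‖e_s‖ ≤ ε_s of log₂(1 + |(h̄_s + e_s)^H w|²/σ_s²)) − (max over k of sup over ‖e‖ ≤ ε_e of log₂(1 + |(h̄_{e,k} + e)^H w|²/σ_e²)) ≥ R }. For τ ≥ 0 define f(τ) = sup of g(w) over all w ∈ ℂⁿ such that ‖w‖² ≤ P, and for every k and every e with ‖e‖ ≤ ε_e: 2^R·|(h̄_{e,k} + e)^H w|²/σ_e² + (2^R − 1) ≤ τ, and for every e_s with ‖e_s‖ ≤ ε_s: |(h̄_s + e_s)^H w|²/σ_s² ≥ τ. Then sup over w ∈ F of g(w)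 equals sup over τ ≥ 0 of f(τ). -/

import Mathlib

/-- The robust harvested-energy objective
`g(w) = min_l inf_{‖e_l‖ ≤ ε_l} |(h̄_l + e_l)^H w|²`. -/
noncomputable def gObj4 (n L : ℕ) (hl : Fin L → EuclideanSpace ℂ (Fin n))
    (εl : Fin L → ℝ) (w : EuclideanSpace ℂ (Fin n)) : ℝ :=
  ⨅ l : Fin L, ⨅ e : {e : EuclideanSpace ℂ (Fin n) // ‖e‖ ≤ εl l},
    ‖(inner ℂ (hl l + e.1) w : ℂ)‖ ^ 2

/-- The robust feasible set `F` (power and worst-case secrecy-rate constraints). -/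
noncomputable def FeasSet4 (n K : ℕ) (hs : EuclideanSpace ℂ (Fin n))
    (he : Fin K → EuclideanSpace ℂ (Fin n)) (σs σe εs εe P R : ℝ) :
    Set (EuclideanSpace ℂ (Fin n)) :=
  {w | ‖w‖ ^ 2 ≤ P ∧
    (⨅ e : {e : EuclideanSpace ℂ (Fin n) // ‖e‖ ≤ εs},
        Real.logb 2 (1 + ‖(inner ℂ (hs + e.1) w : ℂ)‖ ^ 2 / σs ^ 2)) -
      (⨆ k : Fin K, ⨆ e : {e : EuclideanSpace ℂ (Fin n) // ‖e‖ ≤ εe},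
        Real.logb 2 (1 + ‖(inner ℂ (he k + e.1) w : ℂ)‖ ^ 2 / σe ^ 2)) ≥ R}

/-- The one-parameter value function `f(τ)` (extended-real valued). -/
noncomputable def fTau4 (n K L : ℕ) (hs : EuclideanSpace ℂ (Fin n))
    (he : Fin K → EuclideanSpace ℂ (Fin n)) (hl : Fin L → EuclideanSpace ℂ (Fin n))
    (σs σe εs εe : ℝ) (εl : Fin L → ℝ) (P R τ : ℝ) : EReal :=
  ⨆ w : EuclideanSpace ℂ (Fin n),
    ⨆ _ : (‖w‖ ^ 2 ≤ P ∧
        (∀ k : Fin K, ∀ e : EuclideanSpace ℂ (Fin n), ‖e‖ ≤ εe →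
          (2 : ℝ) ^ R * ‖(inner ℂ (he k + e) w : ℂ)‖ ^ 2 / σe ^ 2 + ((2 : ℝ) ^ R - 1) ≤ τ) ∧
        (∀ e : EuclideanSpace ℂ (Fin n), ‖e‖ ≤ εs →
          τ ≤ ‖(inner ℂ (hs + e) w : ℂ)‖ ^ 2 / σs ^ 2)),
      ((gObj4 n L hl εl w : ℝ) : EReal)

/-!
A beamformer `w` is feasible iff some `τ ≥ 0` makes it admissible for `f(τ)`, so both sides are
suprema of `g` over the same set. Writing `y` for the legitimate and `x` for the eavesdroppers'
SNRs, the worst-case secrecy rate is at least `R` iff `log₂ (1 + x) + R ≤ log₂ (1 + y)` for every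
pair of channel errors, i.e. `2^R x + 2^R - 1 ≤ y`; the worst-case legitimate SNR `τ = inf y`
then separates the two families.
-/

open Real Set

section Thresholds

variable {ι κ ι' : Type*} [Nonempty ι]

theorem le_ciInf_sub_ciSup_ciSup_iff [Finite κ] [Nonempty κ] [Nonempty ι'] {u : ι → ℝ}
    {v : κ → ι' → ℝ} (hu : BddBelow (range u)) (hv : ∀ k, BddAbove (range (v k))) (R : ℝ) :
    R ≤ (⨅ i, u i) - ⨆ k, ⨆ j, v k j ↔ ∀ k j i, v k j + R ≤ u i := by
  have hsup : BddAbove (range fun k => ⨆ j, v k j) := Finite.bddAbove_range _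
  calc R ≤ (⨅ i, u i) - ⨆ k, ⨆ j, v k j ↔ ⨆ k, ⨆ j, v k j ≤ (⨅ i, u i) - R := by
        constructor <;> intro <;> linarith
    _ ↔ ∀ k j i, v k j + R ≤ u i := by
        simp_rw [ciSup_le_iff hsup, ciSup_le_iff (hv _), le_sub_iff_add_le, le_ciInf_iff hu]

theorem forall_le_iff_exists_nonneg_between {X : κ → ι' → ℝ} {Y : ι → ℝ} (hY : ∀ i, 0 ≤ Y i) :
    (∀ k j i, X k j ≤ Y i) ↔ ∃ τ, 0 ≤ τ ∧ (∀ k j, X k j ≤ τ) ∧ ∀ i, τ ≤ Y i := by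
  constructor
  · intro h
    exact ⟨⨅ i, Y i, le_ciInf hY, fun k j => le_ciInf (h k j),
      ciInf_le ⟨0, by rintro _ ⟨i, rfl⟩; exact hY i⟩⟩
  · rintro ⟨τ, -, hX, hτ⟩ k j i
    exact (hX k j).trans (hτ i)

theorem logb_one_add_add_le_logb_one_add_iff {b x y R : ℝ} (hb : 1 < b) (hx : 0 < 1 + x)
    (hy : 0 < 1 + y) : logb b (1 + x) + R ≤ logb b (1 + y) ↔ b ^ R * x + (b ^ R - 1) ≤ y := by
  have hbR : 0 < b ^ R := rpow_pos_of_pos (by linarith) R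
  rw [show logb b (1 + x) + R = logb b ((1 + x) * b ^ R) by
      rw [logb_mul hx.ne' hbR.ne', logb_rpow (by linarith) hb.ne'],
    logb_le_logb hb (mul_pos hx hbR) hy, add_mul, one_mul]
  constructor <;> intro <;> linarith

theorem le_ciInf_logb_sub_ciSup_ciSup_logb_iff [Finite κ] [Nonempty κ] [Nonempty ι'] {b : ℝ}
    (hb : 1 < b) {y : ι → ℝ} {x : κ → ι' → ℝ} (hy : ∀ i, 0 ≤ y i) (hx : ∀ k j, 0 ≤ x k j)
    (hxb : ∀ k, BddAbove (range (x k))) (R : ℝ) :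
    R ≤ (⨅ i, logb b (1 + y i)) - ⨆ k, ⨆ j, logb b (1 + x k j) ↔
      ∃ τ, 0 ≤ τ ∧ (∀ k j, b ^ R * x k j + (b ^ R - 1) ≤ τ) ∧ ∀ i, τ ≤ y i := by
  have hlogy : BddBelow (range fun i => logb b (1 + y i)) :=
    ⟨0, by rintro _ ⟨i, rfl⟩; exact logb_nonneg hb (by linarith [hy i])⟩
  have hlogx (k : κ) : BddAbove (range fun j => logb b (1 + x k j)) := by
    obtain ⟨M, hM⟩ := hxb k
    refine ⟨logb b (1 + M), ?_⟩
    rintro _ ⟨j, rfl⟩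
    exact logb_le_logb_of_le hb (by linarith [hx k j]) (by linarith [hM ⟨j, rfl⟩])
  rw [le_ciInf_sub_ciSup_ciSup_iff hlogy hlogx]
  have hpoint (k : κ) (j : ι') (i : ι) :
      logb b (1 + x k j) + R ≤ logb b (1 + y i) ↔ b ^ R * x k j + (b ^ R - 1) ≤ y i :=
    logb_one_add_add_le_logb_one_add_iff hb (by linarith [hx k j]) (by linarith [hy i])
  simp only [hpoint]
  exact forall_le_iff_exists_nonneg_between hy

end Thresholds

theorem bddAbove_range_norm_inner_add_sq_div {𝕜 E : Type*} [RCLike 𝕜] [NormedAddCommGroup E]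
    [InnerProductSpace 𝕜 E] (h w : E) (ε σ : ℝ) :
    BddAbove (range fun e : {e : E // ‖e‖ ≤ ε} => ‖(inner 𝕜 (h + e.1) w : 𝕜)‖ ^ 2 / σ ^ 2) := by
  refine ⟨((‖h‖ + ε) * ‖w‖) ^ 2 / σ ^ 2, ?_⟩
  rintro _ ⟨e, rfl⟩
  have hnorm : ‖(inner 𝕜 (h + e.1) w : 𝕜)‖ ≤ (‖h‖ + ε) * ‖w‖ :=
    calc ‖(inner 𝕜 (h + e.1) w : 𝕜)‖ ≤ ‖h + e.1‖ * ‖w‖ := norm_inner_le_norm _ _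
      _ ≤ (‖h‖ + ε) * ‖w‖ := by gcongr; exact (norm_add_le _ _).trans (by linarith [e.2])
  dsimp only
  gcongr

theorem mem_FeasSet4_iff {n K : ℕ} [Nonempty (Fin K)] {hs : EuclideanSpace ℂ (Fin n)}
    {he : Fin K → EuclideanSpace ℂ (Fin n)} {σs σe εs εe P R : ℝ} (hεs : 0 ≤ εs) (hεe : 0 ≤ εe)
    (w : EuclideanSpace ℂ (Fin n)) :
    w ∈ FeasSet4 n K hs he σs σe εs εe P R ↔ ∃ τ, 0 ≤ τ ∧ (‖w‖ ^ 2 ≤ P ∧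
        (∀ k : Fin K, ∀ e : EuclideanSpace ℂ (Fin n), ‖e‖ ≤ εe →
          (2 : ℝ) ^ R * ‖(inner ℂ (he k + e) w : ℂ)‖ ^ 2 / σe ^ 2 + ((2 : ℝ) ^ R - 1) ≤ τ) ∧
        (∀ e : EuclideanSpace ℂ (Fin n), ‖e‖ ≤ εs →
          τ ≤ ‖(inner ℂ (hs + e) w : ℂ)‖ ^ 2 / σs ^ 2)) := by
  have : Nonempty {e : EuclideanSpace ℂ (Fin n) // ‖e‖ ≤ εs} := ⟨⟨0, by simpa using hεs⟩⟩
  have : Nonempty {e : EuclideanSpace ℂ (Fin n) // ‖e‖ ≤ εe} := ⟨⟨0, by simpa using hεe⟩⟩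
  simp only [FeasSet4, mem_ofPred_eq, ge_iff_le]
  rw [le_ciInf_logb_sub_ciSup_ciSup_logb_iff one_lt_two (fun _ => by positivity)
    (fun _ _ => by positivity) (fun k => bddAbove_range_norm_inner_add_sq_div (he k) w εe σe)]
  simp only [Subtype.forall, mul_div_assoc]
  exact ⟨fun ⟨hP, τ, hτ⟩ => ⟨τ, hτ.1, hP, hτ.2⟩, fun ⟨τ, hτ, hP, h⟩ => ⟨hP, τ, hτ, h⟩⟩

theorem stmt4_general (n K L : ℕ) (hK : 1 ≤ K)
    (hs : EuclideanSpace ℂ (Fin n))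
    (he : Fin K → EuclideanSpace ℂ (Fin n)) (hl : Fin L → EuclideanSpace ℂ (Fin n))
    (σs σe εs εe P R : ℝ) (εl : Fin L → ℝ)
    (hεs : 0 ≤ εs) (hεe : 0 ≤ εe) :
    (⨆ w : EuclideanSpace ℂ (Fin n),
        ⨆ _ : w ∈ FeasSet4 n K hs he σs σe εs εe P R,
          ((gObj4 n L hl εl w : ℝ) : EReal)) =
      ⨆ τ : ℝ, ⨆ _ : 0 ≤ τ, fTau4 n K L hs he hl σs σe εs εe εl P R τ := by
  have : Nonempty (Fin K) := ⟨⟨0, hK⟩⟩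
  simp_rw [fTau4, mem_FeasSet4_iff hεs hεe, iSup_exists, iSup_and]
  rw [iSup_comm]
  refine iSup_congr fun τ => ?_
  rw [iSup_comm]

/-- Theorem 1: `sup_{w ∈ F} g(w) = sup_{τ ≥ 0} f(τ)`. -/
theorem stmt4 (n K L : ℕ) (hn : 1 ≤ n) (hK : 1 ≤ K) (hL : 1 ≤ L)
    (hs : EuclideanSpace ℂ (Fin n))
    (he : Fin K → EuclideanSpace ℂ (Fin n)) (hl : Fin L → EuclideanSpace ℂ (Fin n))
    (σs σe εs εe P R : ℝ) (εl : Fin L → ℝ)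
    (hσs : 0 < σs) (hσe : 0 < σe) (hεs : 0 ≤ εs) (hεe : 0 ≤ εe)
    (hεl : ∀ l, 0 ≤ εl l) (hP : 0 < P) (hR : 0 ≤ R) :
    (⨆ w : EuclideanSpace ℂ (Fin n),
        ⨆ _ : w ∈ FeasSet4 n K hs he σs σe εs εe P R,
          ((gObj4 n L hl εl w : ℝ) : EReal)) =
      ⨆ τ : ℝ, ⨆ _ : 0 ≤ τ, fTau4 n K L hs he hl σs σe εs εe εl P R τ :=
  stmt4_general n K L hK hs he hl σs σe εs εe P R εl hεs hεe
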